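/- For i.i.d. Bernoulli(p) trials with 0<p<1, P(L(n) < k) ≥ ∏_{m=k}^{n} P(S_m - S_{m-k} < k) = (1-p^k)^{n-k+1} for 1 ≤ k ≤ n, where S_i = X_1+...+X_i; i.e., the events {S_m - S_{m-k} < k}, k ≤ m ≤ n, are positively correlated. -/

import Mathlib

/-
Let `G N` be the event that no `k` consecutive trials among `X 0, …, X (N - 1)` all succeed, and
`C N` the event that `X (N - k), …, X (N - 1)` all succeed, so that `G (N + 1) = G N \ C (N + 1)`.
On `C (N + 1)`, the event `G N` forces trial `N - k` to fail and implies `G (N + 1 - k)`;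
conversely, "`G (N + 1 - k)` and trial `N - k` fails" implies `G N`. That event only involves
trials before `N + 1 - k`, so it is independent of `C (N + 1)`, whence
`P (G N ∩ C (N + 1)) ≤ p ^ k P (G N)`, i.e. `P (G (N + 1)) ≥ (1 - p ^ k) P (G N)`. Induction from
`P (G k) = 1 - p ^ k` gives the bound; this is the case of Harris's inequality that is needed.
-/

open MeasureTheory ProbabilityTheory Filter Set
open scoped ENNReal Classical

/-- The longest run of `true`s among the first `n` trials `X 0, ..., X (n-1)`. -/
noncomputable def longestRun (X : ℕ → Bool) (n : ℕ) : ℕ :=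
  (Finset.range (n + 1)).sup fun ℓ =>
    if ∃ i, i + ℓ ≤ n ∧ ∀ j < ℓ, X (i + j) = true then ℓ else 0

lemma le_longestRun_iff {Y : ℕ → Bool} {n k : ℕ} :
    k ≤ longestRun Y n ↔ ∃ i, i + k ≤ n ∧ ∀ j < k, Y (i + j) = true := by
  rcases Nat.eq_zero_or_pos k with rfl | hk
  · exact iff_of_true (Nat.zero_le _) ⟨0, by simp, by simp⟩
  rw [longestRun, Finset.le_sup_iff hk]
  constructor
  · rintro ⟨ℓ, -, hℓ⟩
    split_ifs at hℓ with hrun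
    · obtain ⟨i, hi, hY⟩ := hrun
      exact ⟨i, by omega, fun j hj => hY j (by omega)⟩
    · omega
  · rintro ⟨i, hi, hY⟩
    exact ⟨k, Finset.mem_range.mpr (by omega), by rw [if_pos ⟨i, hi, hY⟩]⟩

lemma longestRun_lt_iff {Y : ℕ → Bool} {n k : ℕ} :
    longestRun Y n < k ↔ ∀ m ∈ Finset.Icc k n, ¬ ∀ j ∈ Finset.Ico (m - k) m, Y j = true := by
  rw [← not_le, le_longestRun_iff]
  simp only [not_exists, not_and, Finset.mem_Icc, Finset.mem_Ico]
  constructor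
  · intro h m hm hY
    exact h (m - k) (by omega) fun j hj => hY _ ⟨by omega, by omega⟩
  · intro h i hi hY
    exact h (i + k) ⟨by omega, hi⟩ fun j hj => by
      simpa [show i + (j - i) = j by omega] using hY (j - i) (by omega)

lemma windowCount_lt_iff (Y : ℕ → Bool) {k m : ℕ} (hkm : k ≤ m) :
    (∑ j ∈ Finset.range m, if Y j = true then 1 else 0) -
        (∑ j ∈ Finset.range (m - k), if Y j = true then 1 else 0) < k ↔
      ¬ ∀ j ∈ Finset.Ico (m - k) m, Y j = true := by
  rw [← Finset.sum_range_add_sum_Ico _ (Nat.sub_le m k), Nat.add_sub_cancel_left,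
    ← Finset.card_filter, ← Finset.card_filter_eq_iff, Nat.card_Ico, Nat.sub_sub_self hkm]
  have hle := Finset.card_filter_le (Finset.Ico (m - k) m) (fun j => Y j = true)
  rw [Nat.card_Ico, Nat.sub_sub_self hkm] at hle
  omega

lemma longestRun_mono (Y : ℕ → Bool) : Monotone (longestRun Y) := fun _ _ hnn' =>
  le_of_forall_le fun _ hk =>
    let ⟨i, hi, hY⟩ := le_longestRun_iff.mp hk
    le_longestRun_iff.mpr ⟨i, hi.trans hnn', hY⟩

lemma dependsOn_longestRun (n : ℕ) : DependsOn (fun Y => longestRun Y n) (Set.Iio n) := by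
  have hle : ∀ Y Y' : ℕ → Bool, (∀ i ∈ Set.Iio n, Y i = Y' i) →
      longestRun Y n ≤ longestRun Y' n := fun Y Y' hYY' =>
    le_of_forall_le fun k hk => by
      obtain ⟨i, hi, hY⟩ := le_longestRun_iff.mp hk
      exact le_longestRun_iff.mpr
        ⟨i, hi, fun j hj => hYY' (i + j) (Set.mem_Iio.mpr (by omega)) ▸ hY j hj⟩
  exact fun Y Y' hYY' => (hle Y Y' hYY').antisymm (hle Y' Y fun i hi => (hYY' i hi).symm)

lemma longestRun_succ_lt_iff {Y : ℕ → Bool} {N k : ℕ} (hk : k ≤ N + 1) :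
    longestRun Y (N + 1) < k ↔
      longestRun Y N < k ∧ ¬ ∀ j ∈ Finset.Ico (N + 1 - k) (N + 1), Y j = true := by
  rw [longestRun_lt_iff, longestRun_lt_iff, ← Finset.insert_Icc_right_eq_Icc_add_one hk,
    Finset.forall_mem_insert, and_comm]

lemma longestRun_lt_of_eq_false {Y : ℕ → Bool} {N k : ℕ} (hY : Y (N - k) = false)
    (hrun : longestRun Y (N + 1 - k) < k) : longestRun Y N < k := by
  rw [longestRun_lt_iff] at hrun ⊢
  intro m hm hwindow
  obtain ⟨hkm, hmN⟩ := Finset.mem_Icc.mp hm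
  rcases le_or_gt m (N + 1 - k) with hm' | hm'
  · exact hrun m (Finset.mem_Icc.mpr ⟨hkm, hm'⟩) hwindow
  · simp [hwindow (N - k) (Finset.mem_Ico.mpr ⟨by omega, by omega⟩)] at hY

lemma eq_false_of_longestRun_lt {Y : ℕ → Bool} {N k : ℕ} (hkN : k ≤ N)
    (hrun : longestRun Y N < k) (hwindow : ∀ j ∈ Finset.Ico (N + 1 - k) (N + 1), Y j = true) :
    Y (N - k) = false := by
  rw [← Bool.not_eq_true]
  intro hY
  refine longestRun_lt_iff.mp hrun N (Finset.mem_Icc.mpr ⟨hkN, le_rfl⟩) fun j hj => ?_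
  obtain ⟨hlo, hhi⟩ := Finset.mem_Ico.mp hj
  rcases hlo.eq_or_lt with rfl | hlt
  · exact hY
  · exact hwindow j (Finset.mem_Ico.mpr ⟨by omega, by omega⟩)

lemma ProbabilityTheory.iIndepFun.measure_inter_eq_mul_of_dependsOn {Ω : Type*}
    [MeasurableSpace Ω] {μ : Measure Ω} {X : ℕ → Ω → Bool} (hindep : iIndepFun X μ)
    (hmeas : ∀ i, Measurable (X i)) {S T : Finset ℕ} (hST : Disjoint S T)
    {P Q : (ℕ → Bool) → Prop} (hP : DependsOn P S) (hQ : DependsOn Q T) :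
    μ ({ω | P (X · ω)} ∩ {ω | Q (X · ω)}) = μ {ω | P (X · ω)} * μ {ω | Q (X · ω)} := by
  obtain ⟨f, rfl⟩ := dependsOn_iff_exists_comp.mp hP
  obtain ⟨g, rfl⟩ := dependsOn_iff_exists_comp.mp hQ
  exact (hindep.indepFun_finset S T hST hmeas).measure_inter_preimage_eq_mul {v | f v} {v | g v}
    (Set.toFinite _).measurableSet (Set.toFinite _).measurableSet

lemma ENNReal.toReal_one_sub_ofReal_pow {p : ℝ} (hp0 : 0 ≤ p) (hp1 : p ≤ 1) (k : ℕ) :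
    ((1 : ℝ≥0∞) - ENNReal.ofReal p ^ k).toReal = 1 - p ^ k := by
  rw [← ENNReal.ofReal_pow hp0,
    ENNReal.toReal_sub_of_le (ENNReal.ofReal_le_one.mpr (pow_le_one₀ hp0 hp1)) ENNReal.one_ne_top,
    ENNReal.toReal_one, ENNReal.toReal_ofReal (pow_nonneg hp0 k)]

section BernoulliTrials

variable {Ω : Type*} [MeasurableSpace Ω] {μ : Measure Ω} {X : ℕ → Ω → Bool} {q : ℝ≥0∞}

lemma measurableSet_setOf_forall_eq_true (hmeas : ∀ i, Measurable (X i)) (s : Finset ℕ) :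
    MeasurableSet {ω | ∀ j ∈ s, X j ω = true} := by
  simp only [Set.ofPred_forall]
  exact Finset.measurableSet_biInter s fun j _ => hmeas j (measurableSet_singleton true)

lemma measure_setOf_forall_eq_true (hindep : iIndepFun X μ)
    (hdist : ∀ i, μ {ω | X i ω = true} = q) (s : Finset ℕ) :
    μ {ω | ∀ j ∈ s, X j ω = true} = q ^ s.card := by
  simp only [Set.ofPred_forall]
  rw [hindep.meas_biInter (s := fun j => {ω | X j ω = true})
      fun i _ => ⟨{true}, measurableSet_singleton true, rfl⟩,
    Finset.prod_congr rfl fun i _ => hdist i, Finset.prod_const]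

lemma measure_setOf_not_forall_eq_true [IsProbabilityMeasure μ] (hmeas : ∀ i, Measurable (X i))
    (hindep : iIndepFun X μ) (hdist : ∀ i, μ {ω | X i ω = true} = q) (s : Finset ℕ) :
    μ {ω | ¬ ∀ j ∈ s, X j ω = true} = 1 - q ^ s.card := by
  rw [← Set.compl_ofPred, prob_compl_eq_one_sub (measurableSet_setOf_forall_eq_true hmeas s),
    measure_setOf_forall_eq_true hindep hdist]

lemma measure_longestRun_lt_inter_setOf_forall_eq_true_le (hmeas : ∀ i, Measurable (X i))
    (hindep : iIndepFun X μ) (hdist : ∀ i, μ {ω | X i ω = true} = q) {k N : ℕ}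
    (hk : 1 ≤ k) (hkN : k ≤ N) :
    μ ({ω | longestRun (X · ω) N < k} ∩
        {ω | ∀ j ∈ Finset.Ico (N + 1 - k) (N + 1), X j ω = true}) ≤
      q ^ k * μ {ω | longestRun (X · ω) N < k} := by
  have hpast : DependsOn (fun Y => longestRun Y (N + 1 - k) < k ∧ Y (N - k) = false)
      (Finset.range (N + 1 - k)) := fun Y Y' hYY' => by
    simp only [Finset.coe_range] at hYY'
    exact congrArg₂ (fun r b => r < k ∧ b = false) (dependsOn_longestRun (N + 1 - k) hYY')
      (hYY' (N - k) (Set.mem_Iio.mpr (by omega)))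
  have hwindow : DependsOn (fun Y => ∀ j ∈ Finset.Ico (N + 1 - k) (N + 1), Y j = true)
      (Finset.Ico (N + 1 - k) (N + 1)) := fun Y Y' hYY' =>
    propext (forall₂_congr fun j hj => by rw [hYY' j hj])
  have hdisj : Disjoint (Finset.range (N + 1 - k)) (Finset.Ico (N + 1 - k) (N + 1)) :=
    Finset.disjoint_left.mpr fun j hj hj' =>
      (Finset.mem_range.mp hj).not_ge (Finset.mem_Ico.mp hj').1
  calc _ ≤ μ ({ω | longestRun (X · ω) (N + 1 - k) < k ∧ X (N - k) ω = false} ∩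
          {ω | ∀ j ∈ Finset.Ico (N + 1 - k) (N + 1), X j ω = true}) :=
        measure_mono <| by
          rintro ω ⟨hrun, hall⟩
          exact ⟨⟨(longestRun_mono _ (by omega)).trans_lt hrun,
            eq_false_of_longestRun_lt hkN hrun hall⟩, hall⟩
    _ = μ {ω | longestRun (X · ω) (N + 1 - k) < k ∧ X (N - k) ω = false} *
          μ {ω | ∀ j ∈ Finset.Ico (N + 1 - k) (N + 1), X j ω = true} :=
        hindep.measure_inter_eq_mul_of_dependsOn hmeas hdisj hpast hwindow
    _ ≤ q ^ k * μ {ω | longestRun (X · ω) N < k} := by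
        rw [measure_setOf_forall_eq_true hindep hdist, Nat.card_Ico,
          Nat.sub_sub_self (by omega : k ≤ N + 1), mul_comm]
        gcongr
        exact fun h => longestRun_lt_of_eq_false h.2 h.1

lemma one_sub_pow_mul_le_measure_longestRun_succ_lt [IsProbabilityMeasure μ]
    (hmeas : ∀ i, Measurable (X i)) (hindep : iIndepFun X μ)
    (hdist : ∀ i, μ {ω | X i ω = true} = q) {k N : ℕ} (hk : 1 ≤ k) (hkN : k ≤ N) :
    (1 - q ^ k) * μ {ω | longestRun (X · ω) N < k} ≤
      μ {ω | longestRun (X · ω) (N + 1) < k} := by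
  set G := {ω | longestRun (X · ω) N < k}
  set C := {ω | ∀ j ∈ Finset.Ico (N + 1 - k) (N + 1), X j ω = true}
  have hsucc : {ω | longestRun (X · ω) (N + 1) < k} = G \ C :=
    Set.ext fun ω => longestRun_succ_lt_iff (by omega)
  rw [hsucc, ENNReal.sub_mul fun _ _ => measure_ne_top μ G, one_mul, tsub_le_iff_right]
  calc μ G = μ (G ∩ C) + μ (G \ C) :=
        (measure_inter_add_sdiff G (measurableSet_setOf_forall_eq_true hmeas _)).symm
    _ ≤ q ^ k * μ G + μ (G \ C) := by
        gcongr
        exact measure_longestRun_lt_inter_setOf_forall_eq_true_le hmeas hindep hdist hk hkN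
    _ = μ (G \ C) + q ^ k * μ G := add_comm _ _

lemma one_sub_pow_pow_le_measure_longestRun_lt [IsProbabilityMeasure μ]
    (hmeas : ∀ i, Measurable (X i)) (hindep : iIndepFun X μ)
    (hdist : ∀ i, μ {ω | X i ω = true} = q) {k n : ℕ} (hk : 1 ≤ k) (hkn : k ≤ n) :
    (1 - q ^ k) ^ (n - k + 1) ≤ μ {ω | longestRun (X · ω) n < k} := by
  induction n, hkn using Nat.le_induction with
  | base =>
    have hfirst :
        {ω | longestRun (X · ω) k < k} = {ω | ¬ ∀ j ∈ Finset.Ico 0 k, X j ω = true} := by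
      simp only [longestRun_lt_iff, Finset.Icc_self, Finset.mem_singleton, forall_eq, Nat.sub_self]
    rw [hfirst, measure_setOf_not_forall_eq_true hmeas hindep hdist, Nat.card_Ico, Nat.sub_self,
      zero_add, pow_one, Nat.sub_zero]
  | succ N hkN ih =>
    calc (1 - q ^ k) ^ (N + 1 - k + 1) = (1 - q ^ k) * (1 - q ^ k) ^ (N - k + 1) := by
          rw [← pow_succ', Nat.sub_add_comm hkN]
      _ ≤ (1 - q ^ k) * μ {ω | longestRun (X · ω) N < k} := by gcongr
      _ ≤ μ {ω | longestRun (X · ω) (N + 1) < k} :=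
        one_sub_pow_mul_le_measure_longestRun_succ_lt hmeas hindep hdist hk hkN

end BernoulliTrials

theorem longestRun_cdf_lower_bound_FKG
    {Ω : Type*} [MeasurableSpace Ω] (μ : Measure Ω) [IsProbabilityMeasure μ]
    (X : ℕ → Ω → Bool) (p : ℝ) (hp0 : 0 < p) (hp1 : p < 1)
    (hmeas : ∀ i, Measurable (X i))
    (hindep : iIndepFun X μ)
    (hdist : ∀ i, μ {ω | X i ω = true} = ENNReal.ofReal p)
    (n k : ℕ) (hk : 1 ≤ k) (hkn : k ≤ n) :
    ((1 - p ^ k) ^ (n - k + 1) =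
        ∏ m ∈ Finset.Icc k n,
          (μ {ω | (∑ j ∈ Finset.range m, if X j ω = true then 1 else 0) -
            (∑ j ∈ Finset.range (m - k), if X j ω = true then 1 else 0) < k}).toReal) ∧
      (∏ m ∈ Finset.Icc k n,
          (μ {ω | (∑ j ∈ Finset.range m, if X j ω = true then 1 else 0) -
            (∑ j ∈ Finset.range (m - k), if X j ω = true then 1 else 0) < k}).toReal) ≤
        (μ {ω | longestRun (fun i => X i ω) n < k}).toReal := by
  have hq := ENNReal.toReal_one_sub_ofReal_pow hp0.le hp1.le k
  have hwindow : ∀ m ∈ Finset.Icc k n,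
      (μ {ω | (∑ j ∈ Finset.range m, if X j ω = true then 1 else 0) -
        (∑ j ∈ Finset.range (m - k), if X j ω = true then 1 else 0) < k}).toReal = 1 - p ^ k := by
    intro m hm
    have hkm := (Finset.mem_Icc.mp hm).1
    simp only [windowCount_lt_iff _ hkm]
    rw [measure_setOf_not_forall_eq_true hmeas hindep hdist, Nat.card_Ico, Nat.sub_sub_self hkm, hq]
  have hprod : ∏ m ∈ Finset.Icc k n,
      (μ {ω | (∑ j ∈ Finset.range m, if X j ω = true then 1 else 0) -
        (∑ j ∈ Finset.range (m - k), if X j ω = true then 1 else 0) < k}).toReal =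
      (1 - p ^ k) ^ (n - k + 1) := by
    rw [Finset.prod_congr rfl hwindow, Finset.prod_const, Nat.card_Icc, Nat.sub_add_comm hkn]
  refine ⟨hprod.symm, hprod ▸ ?_⟩
  rw [← hq, ← ENNReal.toReal_pow]
  exact ENNReal.toReal_mono (measure_ne_top μ _)
    (one_sub_pow_pow_le_measure_longestRun_lt hmeas hindep hdist hk hkn)
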